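/- For every natural number f ≥ 1, the function ψ_f(x) = c_f sin((2f+1)x/2), where c_f = (−1)^f · (1/4)·(3/8)·(5/12)···((2f−1)/(4f)) (i.e. c_f = (−1)^f ∏_{k=1}^{f} (2k−1)/(4k)), satisfies the dual-shadow recursion (−1/2+f)² ψ_f + ψ_f'' = −[(−1/2+f)(−1/2+f−1) cos(x) ψ_{f−1}(x) − sin(x) ψ_{f−1}'(x) + cos(x) ψ_{f−1}''(x)] for all real x (with ψ₀(x) = sin(x/2) and the f = 1 equation read as (−1/2+1)² ψ₁ + ψ₁'' = −(−(1/2) cos x ψ₀ − sin x ψ₀')), and ψ_f'(±π) = 0. -/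

import Mathlib

/-!
Write `ω = f - 1/2`. Then `ψ_f` is a multiple of `sin ((ω + 1) x)`, on which `ω² + d²/dx²` acts as
the scalar `ω² - (ω + 1)² = -2f`, while for `φ = c sin (ω x)` the forcing term collapses, by
`φ'' = -ω² φ` and the addition formula, to `c ω sin ((ω + 1) x)`. The recursion is therefore
exactly `-2f c_f = (f - 1/2) c_{f-1}`, the defining recursion of the product `c_f`. The boundary
condition holds because `ψ_f'` is a multiple of `cos ((f + 1/2) x)`, which vanishes at `±π`.
-/

open Real

noncomputable def dualCoeff (f : ℕ) : ℝ :=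
  (-1)^f * ∏ k ∈ Finset.Icc 1 f, ((2*(k : ℝ) - 1) / (4*(k : ℝ)))

noncomputable def dualShadow (f : ℕ) : ℝ → ℝ :=
  fun x => dualCoeff f * Real.sin ((2*(f : ℝ) + 1) * x / 2)

section SineMode

variable (c ω : ℝ)

theorem hasDerivAt_const_mul_sin_mul (x : ℝ) :
    HasDerivAt (fun x => c * sin (ω * x)) (c * ω * cos (ω * x)) x := by
  have h := (((hasDerivAt_id x).const_mul ω).sin).const_mul c
  simp only [id, mul_one] at h
  exact h.congr_deriv (by ring)

theorem deriv_const_mul_sin_mul :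
    deriv (fun x => c * sin (ω * x)) = fun x => c * ω * cos (ω * x) :=
  funext fun x => (hasDerivAt_const_mul_sin_mul c ω x).deriv

theorem deriv_deriv_const_mul_sin_mul :
    deriv (deriv fun x => c * sin (ω * x)) = fun x => -ω ^ 2 * (c * sin (ω * x)) := by
  rw [deriv_const_mul_sin_mul]
  funext x
  have h := (((hasDerivAt_id x).const_mul ω).cos).const_mul (c * ω)
  simp only [id, mul_one] at h
  rw [h.deriv]
  ring

theorem sineMode_forcing (x : ℝ) :
    -(ω * (ω - 1) * cos x * (c * sin (ω * x)) - sin x * (c * ω * cos (ω * x))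
        + cos x * (-ω ^ 2 * (c * sin (ω * x)))) = c * ω * sin ((ω + 1) * x) := by
  rw [add_mul, one_mul, sin_add]
  ring

end SineMode

theorem cos_nat_add_half_mul_pi (n : ℕ) : cos ((n + 1 / 2) * π) = 0 := by
  rw [add_mul, one_div_mul_eq_div, cos_add_pi_div_two, sin_nat_mul_pi, neg_zero]

theorem dualShadow_eq (f : ℕ) :
    dualShadow f = fun x => dualCoeff f * sin ((f + 1 / 2) * x) := by
  funext x
  simp only [dualShadow]
  ring_nf

theorem dualCoeff_succ (n : ℕ) :
    dualCoeff (n + 1) = -((2 * n + 1) / (4 * (n + 1))) * dualCoeff n := by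
  simp only [dualCoeff]
  rw [Finset.prod_Icc_succ_top (by omega)]
  push_cast
  ring

theorem deriv_dualShadow (f : ℕ) :
    deriv (dualShadow f) = fun x => dualCoeff f * (f + 1 / 2) * cos ((f + 1 / 2) * x) := by
  rw [dualShadow_eq, deriv_const_mul_sin_mul]

theorem deriv_deriv_dualShadow (f : ℕ) :
    deriv (deriv (dualShadow f)) = fun x => -((f : ℝ) + 1 / 2) ^ 2 * dualShadow f x := by
  rw [dualShadow_eq, deriv_deriv_const_mul_sin_mul]

theorem deriv_dualShadow_pi (f : ℕ) : deriv (dualShadow f) π = 0 := by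
  simp only [deriv_dualShadow, cos_nat_add_half_mul_pi, mul_zero]

theorem deriv_dualShadow_neg_pi (f : ℕ) : deriv (dualShadow f) (-π) = 0 := by
  simp only [deriv_dualShadow, mul_neg, cos_neg, cos_nat_add_half_mul_pi, mul_zero]

theorem dualShadow_recursion (n : ℕ) (x : ℝ) :
    ((n : ℝ) + 1 / 2) ^ 2 * dualShadow (n + 1) x + deriv (deriv (dualShadow (n + 1))) x =
      -(((n : ℝ) + 1 / 2) * ((n : ℝ) + 1 / 2 - 1) * cos x * dualShadow n x
        - sin x * deriv (dualShadow n) x + cos x * deriv (deriv (dualShadow n)) x) := by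
  rw [deriv_deriv_dualShadow, deriv_deriv_dualShadow, deriv_dualShadow, dualShadow_eq,
    dualShadow_eq, sineMode_forcing, dualCoeff_succ]
  push_cast
  field_simp
  ring_nf

theorem crack_dual_shadows_closed_form (f : ℕ) (hf : 1 ≤ f) :
    (∀ x : ℝ, (-(1/2 : ℝ) + (f : ℝ))^2 * dualShadow f x + deriv (deriv (dualShadow f)) x =
      (if f = 1 then
        -(-(1/2 : ℝ) * Real.cos x * dualShadow 0 x - Real.sin x * deriv (dualShadow 0) x)
      else
        -((-(1/2 : ℝ) + (f : ℝ)) * (-(1/2 : ℝ) + (f : ℝ) - 1) * Real.cos x * dualShadow (f-1) x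
          - Real.sin x * deriv (dualShadow (f-1)) x
          + Real.cos x * deriv (deriv (dualShadow (f-1))) x))) ∧
    deriv (dualShadow f) (-π) = 0 ∧ deriv (dualShadow f) π = 0 := by
  obtain ⟨n, rfl⟩ := Nat.exists_eq_add_of_le' hf
  refine ⟨fun x => ?_, deriv_dualShadow_neg_pi _, deriv_dualShadow_pi _⟩
  have hω : -(1 / 2 : ℝ) + ((n + 1 : ℕ) : ℝ) = n + 1 / 2 := by push_cast; ring
  rw [hω, Nat.add_sub_cancel, dualShadow_recursion]
  split_ifs with h1
  · -- for `f = 1` the two branches agree because `ψ₀'' = -ψ₀ / 4`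
    obtain rfl : n = 0 := by omega
    rw [deriv_deriv_dualShadow]
    push_cast
    ring
  · rfl
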